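/- arXiv:1401.4717 — 4 statements merged into one kernel-verified Lean document; each statement's English description precedes it below -/
import Mathlib

section
/- Let G be a finite group acting freely on a finite vertex set V, and let E' ⊆ E be two G-stable edge sets on V such that (V, E') is connected. Then Fl(V, E) ≅ Fl(V, E') ⊕ (ℤG)^m as G-lattices, where m = (|E| - |E'|)/|G|, and the isomorphism restricted to Fl(V, E') is the natural inclusion. -/
structure DiGraph (V E : Type*) where
  src : E → V
  tgt : E → V

noncomputable def DiGraph.boundary {V E : Type*} [Fintype E] [DecidableEq V]
    (X : DiGraph V E) : (E → ℤ) →ₗ[ℤ] (V → ℤ) where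
  toFun f := fun v =>
    ∑ e, f e * ((if X.tgt e = v then 1 else 0) - (if X.src e = v then 1 else 0))
  map_add' f g := by
    funext v
    simp [add_mul, Finset.sum_add_distrib]
  map_smul' c f := by
    funext v
    simp [Finset.mul_sum, mul_assoc]

/-- The shift of a function on edges by a permutation: `(π • f) e = f (π⁻¹ e)`. -/
def eshift {E : Type*} (π : Equiv.Perm E) (f : E → ℤ) : E → ℤ := fun e => f (π⁻¹ e)

theorem eshift_flow_mem {V E : Type*} [Fintype E] [DecidableEq V] (X : DiGraph V E)
    {G : Type*} [Group G] (actV : G →* Equiv.Perm V) (actE : G →* Equiv.Perm E)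
    (hsrc : ∀ g e, X.src (actE g e) = actV g (X.src e))
    (htgt : ∀ g e, X.tgt (actE g e) = actV g (X.tgt e))
    (g : G) {f : E → ℤ} (hf : f ∈ LinearMap.ker X.boundary) :
    eshift (actE g) f ∈ LinearMap.ker X.boundary := by
  rw [LinearMap.mem_ker] at hf ⊢
  funext v
  have h0 : X.boundary f ((actV g)⁻¹ v) = 0 := by rw [hf]; rfl
  simp only [DiGraph.boundary, LinearMap.coe_mk, AddHom.coe_mk, eshift, Pi.zero_apply] at h0 ⊢
  rw [← Equiv.sum_comp (actE g) (fun e => f ((actE g)⁻¹ e) *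
      ((if X.tgt e = v then 1 else 0) - (if X.src e = v then 1 else 0)))]
  refine Eq.trans (Finset.sum_congr rfl ?_) h0
  intro e _
  simp only [show ∀ x, (actE g)⁻¹ (actE g x) = x from fun x => Equiv.Perm.inv_eq_iff_eq.2 rfl, htgt, hsrc]
  congr 2
  · by_cases h : X.tgt e = (actV g)⁻¹ v
    · simp [h]
    · have h2 : actV g (X.tgt e) ≠ v := fun hc => h (by rw [← hc]; simp)
      simpa [h2] using h
  · by_cases h : X.src e = (actV g)⁻¹ v
    · simp [h]
    · have h2 : actV g (X.src e) ≠ v := fun hc => h (by rw [← hc]; simp)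
      simpa [h2] using h

/-- The `G`-lattice structure on the flow lattice induced by a graph action. -/
noncomputable def flowRep {V E : Type*} [Fintype E] [DecidableEq V] (X : DiGraph V E)
    {G : Type*} [Group G] (actV : G →* Equiv.Perm V) (actE : G →* Equiv.Perm E)
    (hsrc : ∀ g e, X.src (actE g e) = actV g (X.src e))
    (htgt : ∀ g e, X.tgt (actE g e) = actV g (X.tgt e)) :
    G →* Multiplicative (AddAut ↥(LinearMap.ker X.boundary)) where
  toFun g := Multiplicative.ofAdd
    { toFun := fun f => ⟨eshift (actE g) f, eshift_flow_mem X actV actE hsrc htgt g f.2⟩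
      invFun := fun f => ⟨eshift (actE g⁻¹) f, eshift_flow_mem X actV actE hsrc htgt g⁻¹ f.2⟩
      left_inv := by
        intro f; ext e
        simp [eshift]
      right_inv := by
        intro f; ext e
        simp [eshift]
      map_add' := by
        intro a b; ext e
        simp [eshift] }
  map_one' := by
    ext f e
    simp [eshift]
  map_mul' := by
    intro g h
    ext f e
    simp [eshift, mul_inv_rev]
/-- Connectedness of the underlying undirected graph. -/
def DiGraph.Conn {V E : Type*} (X : DiGraph V E) : Prop :=
  (SimpleGraph.fromRel fun u w => ∃ e, X.src e = u ∧ X.tgt e = w).Connected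

/-!
The free action of `G` on `V` makes `G` act freely on the edges, so `E \ E'` is a disjoint union
of `m` regular orbits; choose representatives `eᵢ`. Connectivity of `(V, E')` closes each `eᵢ`
to a flow `σᵢ` that is `1` on `eᵢ` and supported on `E' ∪ {eᵢ}`. The translates `g • σᵢ` are then
dual to the edges `g • eᵢ`, so a flow `f` decomposes uniquely as
`f = (f - ∑ f (g • eᵢ) • g • σᵢ) + ∑ f (g • eᵢ) • g • σᵢ`, the first summand being a flow on `E'`;
this decomposition commutes with `G` because the family `g • σᵢ` is permuted by `G`.
-/

theorem Function.extend_comp_self_zero {α β γ : Type*} [Zero γ] {j : α → β}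
    (hj : Function.Injective j) {f : β → γ} (hf : ∀ b ∉ Set.range j, f b = 0) :
    Function.extend j (f ∘ j) 0 = f := by
  funext b
  by_cases hb : b ∈ Set.range j
  · obtain ⟨a, rfl⟩ := hb
    exact hj.extend_apply _ _ _
  · rw [Function.extend_apply' _ _ _ (by simpa using hb), hf b hb, Pi.zero_apply]

namespace MulAction

theorem bijective_smul_out {G X : Type*} [Group G] [MulAction G X] [IsCancelSMul G X] :
    Function.Bijective fun p : orbitRel.Quotient G X × G => p.2 • p.1.out := by
  constructor
  · rintro ⟨q, g⟩ ⟨q', g'⟩ h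
    dsimp only at h
    obtain rfl : q = q' := by
      rw [← q.out_eq, ← q'.out_eq, Quotient.eq]
      exact ⟨g⁻¹ * g', show (g⁻¹ * g') • _ = _ by rw [mul_smul, ← h, inv_smul_smul]⟩
    exact Prod.ext rfl (IsCancelSMul.right_cancel' _ _ _ h)
  · intro x
    obtain ⟨g, hg⟩ := Quotient.mk_out (s := orbitRel G X) x
    exact ⟨(⟦x⟧, g⁻¹), by simp [← hg]⟩

theorem exists_equiv_fin_prod {G X : Type*} [Group G] [Fintype G] [MulAction G X]
    [IsCancelSMul G X] [Fintype X] {m : ℕ} (hm : Fintype.card X = m * Fintype.card G) :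
    ∃ ψ : Fin m × G ≃ X, ∀ (g : G) (i : Fin m) (x : G), g • ψ (i, x) = ψ (i, g * x) := by
  classical
  let Ψ := Equiv.ofBijective _ (bijective_smul_out (G := G) (X := X))
  have hcard : Fintype.card (orbitRel.Quotient G X) = m := by
    have := Fintype.card_congr Ψ
    rw [Fintype.card_prod, hm] at this
    exact Nat.eq_of_mul_eq_mul_right Fintype.card_pos this
  refine ⟨((Fintype.equivFinOfCardEq hcard).symm.prodCongr (Equiv.refl G)).trans Ψ, fun g i x => ?_⟩
  simp [Ψ, mul_smul]

end MulAction

theorem exists_equivariant_parametrization_compl {E E₀ G : Type*} [Fintype E] [Fintype E₀] [Group G]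
    [Fintype G] {j : E₀ → E} (hj : Function.Injective j) (act : G →* Equiv.Perm E)
    (hstable : ∀ g e, e ∈ Set.range j → act g e ∈ Set.range j)
    (hfree : ∀ g e, act g e = e → g = 1) {m : ℕ}
    (hm : Fintype.card E = Fintype.card E₀ + m * Fintype.card G) :
    ∃ ψ : Fin m → G → E, (∀ i x, ψ i x ∉ Set.range j) ∧ (∀ e ∉ Set.range j, ∃ i x, ψ i x = e) ∧
      (∀ i x i' y, ψ i x = ψ i' y → i = i' ∧ x = y) ∧ ∀ g i x, act g (ψ i x) = ψ i (g * x) := by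
  classical
  let _ : MulAction G E := MulAction.compHom E act
  let C : SubMulAction G E := ⟨(Set.range j)ᶜ, fun g e he hge => he <| by
    simpa only [inv_smul_smul] using (show g⁻¹ • g • e ∈ Set.range j from hstable g⁻¹ _ hge)⟩
  have : IsCancelSMul G C :=
    isCancelSMul_iff_eq_one_of_smul_eq.2 fun g c h => hfree g c (congrArg Subtype.val h)
  have hC : Fintype.card C = m * Fintype.card G := by
    rw [Fintype.card_congr (β := ↥(Set.range j)ᶜ) (Equiv.refl C), Fintype.card_compl_set,
      Set.card_range_of_injective hj]
    omega
  obtain ⟨ψ, hψ⟩ := MulAction.exists_equiv_fin_prod hC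
  refine ⟨fun i x => ψ (i, x), fun i x => (ψ (i, x)).2, fun e he => ?_, fun i x i' y h => ?_,
    fun g i x => congrArg Subtype.val (hψ g i x)⟩
  · obtain ⟨⟨i, x⟩, h⟩ := ψ.surjective ⟨e, he⟩
    exact ⟨i, x, congrArg Subtype.val h⟩
  · simpa using ψ.injective (Subtype.ext h)

namespace DiGraph

variable {V E E₀ : Type*} [DecidableEq V] [Fintype E] [Fintype E₀] (X : DiGraph V E)

theorem boundary_apply (f : E → ℤ) (v : V) : X.boundary f v =
    ∑ e, f e * ((if X.tgt e = v then 1 else 0) - (if X.src e = v then 1 else 0)) := rfl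

theorem boundary_single [DecidableEq E] (e : E) :
    X.boundary (Pi.single e 1) = Pi.single (X.tgt e) 1 - Pi.single (X.src e) 1 := by
  funext v
  simp [boundary_apply, Pi.single_apply, eq_comm]

theorem exists_boundary_eq_of_conn (hX : X.Conn) (u w : V) :
    ∃ f, X.boundary f = Pi.single w 1 - Pi.single u 1 := by
  classical
  obtain ⟨p⟩ := hX.preconnected u w
  induction p with
  | nil => exact ⟨0, by simp⟩
  | @cons a b c hab _ ih =>
    obtain ⟨f, hf⟩ := ih
    obtain ⟨-, ⟨e, rfl, rfl⟩ | ⟨e, rfl, rfl⟩⟩ := SimpleGraph.fromRel_adj _ _ _ |>.1 hab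
    · exact ⟨f + Pi.single e 1, by rw [map_add, hf, boundary_single]; abel⟩
    · exact ⟨f - Pi.single e 1, by rw [map_sub, hf, boundary_single]; abel⟩

variable {X} {X₀ : DiGraph V E₀} {j : E₀ → E}

theorem boundary_extend_zero (hj : Function.Injective j) (hsrc : ∀ e, X.src (j e) = X₀.src e)
    (htgt : ∀ e, X.tgt (j e) = X₀.tgt e) (f₀ : E₀ → ℤ) :
    X.boundary (Function.extend j f₀ 0) = X₀.boundary f₀ := by
  funext v
  refine (Fintype.sum_of_injective j hj _ _ (fun e he => ?_) fun e₀ => ?_).symm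
  · rw [Function.extend_apply' _ _ _ (by simpa using he), Pi.zero_apply, zero_mul]
  · rw [hj.extend_apply, hsrc, htgt]

theorem boundary_comp_eq_zero (hj : Function.Injective j) (hsrc : ∀ e, X.src (j e) = X₀.src e)
    (htgt : ∀ e, X.tgt (j e) = X₀.tgt e) {f : E → ℤ} (hf : X.boundary f = 0)
    (hf₀ : ∀ e ∉ Set.range j, f e = 0) : X₀.boundary (f ∘ j) = 0 := by
  rw [← boundary_extend_zero hj hsrc htgt, Function.extend_comp_self_zero hj hf₀, hf]

theorem exists_flow_eq_single_off_range [DecidableEq E] (hj : Function.Injective j)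
    (hsrc : ∀ e, X.src (j e) = X₀.src e) (htgt : ∀ e, X.tgt (j e) = X₀.tgt e) (hX₀ : X₀.Conn)
    (e : E) :
    ∃ σ, X.boundary σ = 0 ∧ ∀ e' ∉ Set.range j, σ e' = (Pi.single e 1 : E → ℤ) e' := by
  obtain ⟨f₀, hf₀⟩ := X₀.exists_boundary_eq_of_conn hX₀ (X.tgt e) (X.src e)
  refine ⟨Pi.single e 1 + Function.extend j f₀ 0, ?_, fun e' he' => ?_⟩
  · rw [map_add, boundary_single, boundary_extend_zero hj hsrc htgt, hf₀, sub_add_sub_cancel,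
      sub_self]
  · rw [Pi.add_apply, Function.extend_apply' _ _ _ (by simpa using he'), Pi.zero_apply, add_zero]

end DiGraph

section Splitting

variable {V E ι κ : Type*} [Fintype ι] [Fintype κ]

def liftFlow (τ : ι → κ → E → ℤ) : (ι → κ → ℤ) →+ (E → ℤ) where
  toFun c := ∑ i, ∑ x, c i x • τ i x
  map_zero' := by simp
  map_add' c c' := by simp [add_smul, Finset.sum_add_distrib]

theorem liftFlow_apply [DecidableEq ι] [DecidableEq κ] {ψ : ι → κ → E} {τ : ι → κ → E → ℤ}
    (hτψ : ∀ i x i' y, τ i x (ψ i' y) = if i = i' ∧ x = y then 1 else 0)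
    (c : ι → κ → ℤ) (i : ι) (x : κ) : liftFlow τ c (ψ i x) = c i x := by
  simp [liftFlow, Finset.sum_apply, hτψ, ite_and]

theorem sub_liftFlow_eq_zero_of_notMem_range [DecidableEq ι] [DecidableEq κ] {E₀ : Type*}
    {j : E₀ → E} {ψ : ι → κ → E} (hψ : ∀ e ∉ Set.range j, ∃ i x, ψ i x = e)
    {τ : ι → κ → E → ℤ} (hτψ : ∀ i x i' y, τ i x (ψ i' y) = if i = i' ∧ x = y then 1 else 0)
    (f : E → ℤ) {e : E} (he : e ∉ Set.range j) :
    (f - liftFlow τ fun i x => f (ψ i x)) e = 0 := by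
  obtain ⟨i, x, rfl⟩ := hψ e he
  rw [Pi.sub_apply, liftFlow_apply hτψ, sub_self]

variable {E₀ : Type*} [DecidableEq V] [Fintype E] [Fintype E₀] {X : DiGraph V E}
  {X₀ : DiGraph V E₀} {j : E₀ → E}

theorem liftFlow_mem_ker {τ : ι → κ → E → ℤ}
    (hτ : ∀ i x, X.boundary (τ i x) = 0) (c : ι → κ → ℤ) :
    liftFlow τ c ∈ LinearMap.ker X.boundary :=
  Submodule.sum_mem _ fun i _ => Submodule.sum_mem _ fun x _ =>
    Submodule.smul_of_tower_mem _ _ (hτ i x)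

theorem exists_addEquiv_ker_boundary [DecidableEq ι] [DecidableEq κ] (hj : Function.Injective j)
    (hsrc : ∀ e, X.src (j e) = X₀.src e) (htgt : ∀ e, X.tgt (j e) = X₀.tgt e)
    {ψ : ι → κ → E} (hψj : ∀ i x, ψ i x ∉ Set.range j)
    (hψ : ∀ e ∉ Set.range j, ∃ i x, ψ i x = e) {τ : ι → κ → E → ℤ}
    (hτ : ∀ i x, X.boundary (τ i x) = 0)
    (hτψ : ∀ i x i' y, τ i x (ψ i' y) = if i = i' ∧ x = y then 1 else 0) :
    ∃ φ : LinearMap.ker X.boundary ≃+ LinearMap.ker X₀.boundary × (ι → κ → ℤ),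
      ∀ f : LinearMap.ker X.boundary,
        ((φ f).1 : E₀ → ℤ) = ((f : E → ℤ) - liftFlow τ fun i x => f.1 (ψ i x)) ∘ j ∧
        (φ f).2 = fun i x => f.1 (ψ i x) := by
  have hcoords (f₀ : E₀ → ℤ) (c : ι → κ → ℤ) :
      (fun i x => (Function.extend j f₀ 0 + liftFlow τ c) (ψ i x)) = c := by
    funext i x
    rw [Pi.add_apply, Function.extend_apply' _ _ _ (by simpa using hψj i x), liftFlow_apply hτψ,
      Pi.zero_apply, zero_add]
  refine ⟨
    { toFun := fun f => (⟨(f.1 - liftFlow τ fun i x => f.1 (ψ i x)) ∘ j,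
          X.boundary_comp_eq_zero hj hsrc htgt (by
            rw [map_sub, LinearMap.mem_ker.1 f.2, LinearMap.mem_ker.1 (liftFlow_mem_ker hτ _),
              sub_zero]) fun _ => sub_liftFlow_eq_zero_of_notMem_range hψ hτψ _⟩,
        fun i x => f.1 (ψ i x))
      invFun := fun p => ⟨Function.extend j p.1.1 0 + liftFlow τ p.2, by
        rw [LinearMap.mem_ker, map_add, X.boundary_extend_zero hj hsrc htgt,
          LinearMap.mem_ker.1 p.1.2, LinearMap.mem_ker.1 (liftFlow_mem_ker hτ _), add_zero]⟩
      left_inv := fun f => Subtype.ext <| by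
        simp only
        rw [Function.extend_comp_self_zero hj
          fun _ => sub_liftFlow_eq_zero_of_notMem_range hψ hτψ _, sub_add_cancel]
      right_inv := fun ⟨f₀, c⟩ => by
        simp only [hcoords]
        refine Prod.ext (Subtype.ext ?_) rfl
        simp only [add_sub_cancel_right, Function.extend_comp hj]
      map_add' := fun f g => by
        refine Prod.ext (Subtype.ext ?_) rfl
        simp only [Submodule.coe_add, Prod.fst_add]
        rw [show (fun i x => (f.1 + g.1) (ψ i x)) =
          (fun i x => f.1 (ψ i x)) + fun i x => g.1 (ψ i x) from rfl, map_add]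
        funext e₀
        simp only [Function.comp_apply, Pi.add_apply, Pi.sub_apply]
        abel }, fun f => ⟨rfl, rfl⟩⟩

end Splitting

section Equivariance

variable {E E₀ G ι : Type*} [Group G]

theorem eshift_mul (π ρ : Equiv.Perm E) (f : E → ℤ) : eshift (π * ρ) f = eshift π (eshift ρ f) := by
  funext e
  simp [eshift, mul_inv_rev]

theorem eshift_sub (π : Equiv.Perm E) (f f' : E → ℤ) :
    eshift π (f - f') = eshift π f - eshift π f' := rfl

theorem eshift_comp {j : E₀ → E} {π : Equiv.Perm E} {π₀ : Equiv.Perm E₀}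
    (h : ∀ e, j (π₀ e) = π (j e)) (f : E → ℤ) : eshift π f ∘ j = eshift π₀ (f ∘ j) := by
  funext e₀
  simp only [Function.comp_apply, eshift]
  congr 1
  rw [Equiv.Perm.inv_eq_iff_eq, ← h, Equiv.Perm.inv_def, Equiv.apply_symm_apply]

theorem eshift_apply_of_equivariant {act : G →* Equiv.Perm E} {ψ : ι → G → E}
    (hψ : ∀ g i x, act g (ψ i x) = ψ i (g * x)) (g : G) (f : E → ℤ) (i : ι) (x : G) :
    eshift (act g) f (ψ i x) = f (ψ i (g⁻¹ * x)) := by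
  rw [eshift, ← map_inv, hψ]

theorem liftFlow_comp_mul_left [Fintype ι] [Fintype G] {act : G →* Equiv.Perm E}
    {τ : ι → G → E → ℤ} (hτ : ∀ g i x, eshift (act g) (τ i x) = τ i (g * x)) (g : G)
    (c : ι → G → ℤ) : liftFlow τ (fun i x => c i (g⁻¹ * x)) = eshift (act g) (liftFlow τ c) := by
  funext e
  have hτe (i : ι) (x : G) : τ i x ((act g)⁻¹ e) = τ i (g * x) e := congrFun (hτ g i x) e
  simp only [liftFlow, AddMonoidHom.coe_mk, ZeroHom.coe_mk, eshift, Finset.sum_apply,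
    Pi.smul_apply, smul_eq_mul, hτe]
  refine Finset.sum_congr rfl fun i _ => Fintype.sum_equiv (Equiv.mulLeft g⁻¹) _ _ fun x => ?_
  rw [Equiv.coe_mulLeft, mul_inv_cancel_left]

end Equivariance

theorem exists_equivariant_dual_flows {V E E₀ G ι : Type*} [DecidableEq V] [Fintype E]
    [Fintype E₀] [Group G] [DecidableEq G] [DecidableEq ι] {X : DiGraph V E}
    {X₀ : DiGraph V E₀} {j : E₀ → E}
    (hj : Function.Injective j) (hsrc : ∀ e, X.src (j e) = X₀.src e)
    (htgt : ∀ e, X.tgt (j e) = X₀.tgt e) (hX₀ : X₀.Conn)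
    (actV : G →* Equiv.Perm V) (actE : G →* Equiv.Perm E)
    (hsrcE : ∀ g e, X.src (actE g e) = actV g (X.src e))
    (htgtE : ∀ g e, X.tgt (actE g e) = actV g (X.tgt e))
    {ψ : ι → G → E} (hψj : ∀ i x, ψ i x ∉ Set.range j)
    (hψinj : ∀ i x i' y, ψ i x = ψ i' y → i = i' ∧ x = y)
    (hψ : ∀ g i x, actE g (ψ i x) = ψ i (g * x)) :
    ∃ τ : ι → G → E → ℤ, (∀ i x, X.boundary (τ i x) = 0) ∧
      (∀ i x i' y, τ i x (ψ i' y) = if i = i' ∧ x = y then 1 else 0) ∧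
      ∀ g i x, eshift (actE g) (τ i x) = τ i (g * x) := by
  classical
  choose σ hσ hσψ using fun i => X.exists_flow_eq_single_off_range hj hsrc htgt hX₀ (ψ i 1)
  refine ⟨fun i x => eshift (actE x) (σ i), fun i x => ?_, fun i x i' y => ?_,
    fun g i x => by dsimp only; rw [map_mul, eshift_mul]⟩
  · exact LinearMap.mem_ker.1 <|
      eshift_flow_mem X actV actE hsrcE htgtE x (LinearMap.mem_ker.2 (hσ i))
  · dsimp only
    rw [eshift_apply_of_equivariant hψ, hσψ i _ (hψj _ _), Pi.single_apply]
    refine if_congr ⟨fun h => ?_, ?_⟩ rfl rfl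
    · obtain ⟨rfl, hx⟩ := hψinj _ _ _ _ h
      exact ⟨rfl, inv_mul_eq_one.1 hx⟩
    · rintro ⟨rfl, rfl⟩
      rw [inv_mul_cancel]

theorem flow_lattice_of_edge_subset_general {V E E₀ G : Type*} [DecidableEq V]
    [Fintype E] [Fintype E₀] [Group G] [Fintype G]
    (X : DiGraph V E) (X₀ : DiGraph V E₀)
    (j : E₀ → E) (hjinj : Function.Injective j)
    (hjsrc : ∀ e, X.src (j e) = X₀.src e) (hjtgt : ∀ e, X.tgt (j e) = X₀.tgt e)
    (actV : G →* Equiv.Perm V) (actE : G →* Equiv.Perm E) (actE₀ : G →* Equiv.Perm E₀)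
    (hsrc : ∀ g e, X.src (actE g e) = actV g (X.src e))
    (htgt : ∀ g e, X.tgt (actE g e) = actV g (X.tgt e))
    (hjequi : ∀ g e, j (actE₀ g e) = actE g (j e))
    (hfree : ∀ g : G, g ≠ 1 → ∀ v : V, actV g v ≠ v)
    (hconn₀ : X₀.Conn)
    (m : ℕ) (hm : Fintype.card E = Fintype.card E₀ + m * Fintype.card G) :
    ∃ φ : ↥(LinearMap.ker X.boundary) ≃+
        ↥(LinearMap.ker X₀.boundary) × (Fin m → (G → ℤ)),
      (∀ (g : G) (f : ↥(LinearMap.ker X.boundary)),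
        (((φ (flowRep X actV actE hsrc htgt g f)).1 : E₀ → ℤ)
            = eshift (actE₀ g) ((φ f).1 : E₀ → ℤ)) ∧
        (φ (flowRep X actV actE hsrc htgt g f)).2
            = fun i x => (φ f).2 i (g⁻¹ * x)) ∧
      ∀ (f₀ : E₀ → ℤ) (hf₀ : f₀ ∈ LinearMap.ker X₀.boundary)
        (f : E → ℤ) (hf : f ∈ LinearMap.ker X.boundary),
          (∀ e₀, f (j e₀) = f₀ e₀) → (∀ e, e ∉ Set.range j → f e = 0) →
          φ ⟨f, hf⟩ = (⟨f₀, hf₀⟩, 0) := by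
  classical
  have hfreeE (g : G) (e : E) (he : actE g e = e) : g = 1 :=
    by_contra fun hg => hfree g hg _ (by rw [← hsrc, he])
  have hstable (g : G) : ∀ e ∈ Set.range j, actE g e ∈ Set.range j := by
    rintro _ ⟨e₀, rfl⟩
    exact ⟨actE₀ g e₀, hjequi g e₀⟩
  obtain ⟨ψ, hψj, hψ, hψinj, hψact⟩ :=
    exists_equivariant_parametrization_compl hjinj actE hstable hfreeE hm
  obtain ⟨τ, hτ, hτψ, hτact⟩ := exists_equivariant_dual_flows hjinj hjsrc hjtgt hconn₀ actV actE
    hsrc htgt hψj hψinj hψact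
  obtain ⟨φ, hφ⟩ := exists_addEquiv_ker_boundary hjinj hjsrc hjtgt hψj hψ hτ hτψ
  have hcoords (g : G) (f : E → ℤ) : (fun i x => eshift (actE g) f (ψ i x)) =
      fun i x => f (ψ i (g⁻¹ * x)) := funext₂ (eshift_apply_of_equivariant hψact g f)
  refine ⟨φ, fun g f => ⟨?_, ?_⟩, fun f₀ hf₀ f hf hfj hfoff => ?_⟩
  · rw [(hφ _).1, (hφ f).1, ← eshift_comp (hjequi g), eshift_sub, ← liftFlow_comp_mul_left hτact,
      ← hcoords]
    rfl
  · rw [(hφ _).2, (hφ f).2, ← hcoords]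
    rfl
  · have hc : (fun i x => f (ψ i x)) = 0 := funext₂ fun i x => hfoff _ (hψj i x)
    obtain ⟨h₁, h₂⟩ := hφ ⟨f, hf⟩
    refine Prod.ext (Subtype.ext ?_) (h₂.trans hc)
    rw [h₁]
    simp only [hc, map_zero, sub_zero]
    exact funext hfj

/-- Suppose a finite group `G` acts freely on `V`, and `E' ⊆ E` (modelled by a
`G`-equivariant injection `j : E₀ → E` of graphs over `V`) are `G`-stable edge sets
with `(V, E')` connected.  Then `Fl(V, E) ≅ Fl(V, E') ⊕ (ℤG)^m` as `G`-lattices, where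
`m = (|E| - |E'|)/|G|`, the isomorphism restricting to the natural (extension-by-zero)
inclusion of `Fl(V, E')`. -/
theorem flow_lattice_of_edge_subset {V E E₀ G : Type*} [Fintype V] [DecidableEq V]
    [Fintype E] [Fintype E₀] [Group G] [Fintype G]
    (X : DiGraph V E) (X₀ : DiGraph V E₀)
    (j : E₀ → E) (hjinj : Function.Injective j)
    (hjsrc : ∀ e, X.src (j e) = X₀.src e) (hjtgt : ∀ e, X.tgt (j e) = X₀.tgt e)
    (actV : G →* Equiv.Perm V) (actE : G →* Equiv.Perm E) (actE₀ : G →* Equiv.Perm E₀)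
    (hsrc : ∀ g e, X.src (actE g e) = actV g (X.src e))
    (htgt : ∀ g e, X.tgt (actE g e) = actV g (X.tgt e))
    (hsrc₀ : ∀ g e, X₀.src (actE₀ g e) = actV g (X₀.src e))
    (htgt₀ : ∀ g e, X₀.tgt (actE₀ g e) = actV g (X₀.tgt e))
    (hjequi : ∀ g e, j (actE₀ g e) = actE g (j e))
    (hfree : ∀ g : G, g ≠ 1 → ∀ v : V, actV g v ≠ v)
    (hconn₀ : X₀.Conn)
    (m : ℕ) (hm : Fintype.card E = Fintype.card E₀ + m * Fintype.card G) :
    ∃ φ : ↥(LinearMap.ker X.boundary) ≃+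
        ↥(LinearMap.ker X₀.boundary) × (Fin m → (G → ℤ)),
      (∀ (g : G) (f : ↥(LinearMap.ker X.boundary)),
        (((φ (flowRep X actV actE hsrc htgt g f)).1 : E₀ → ℤ)
            = eshift (actE₀ g) ((φ f).1 : E₀ → ℤ)) ∧
        (φ (flowRep X actV actE hsrc htgt g f)).2
            = fun i x => (φ f).2 i (g⁻¹ * x)) ∧
      ∀ (f₀ : E₀ → ℤ) (hf₀ : f₀ ∈ LinearMap.ker X₀.boundary)
        (f : E → ℤ) (hf : f ∈ LinearMap.ker X.boundary),
          (∀ e₀, f (j e₀) = f₀ e₀) → (∀ e, e ∉ Set.range j → f e = 0) →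
          φ ⟨f, hf⟩ = (⟨f₀, hf₀⟩, 0) :=
  flow_lattice_of_edge_subset_general X X₀ j hjinj hjsrc hjtgt actV actE actE₀ hsrc htgt hjequi
    hfree hconn₀ m hm
end

section
/- Let G be a finite group with subgroups H₁, ..., H_k such that gcd([G:H₁], ..., [G:H_k]) = 1. Let M be a G-lattice. If the restriction M|_{H_i} is an invertible H_i-lattice (i.e., a direct summand of a permutation H_i-lattice) for every i, then M is an invertible G-lattice. -/
/-- The multiplicative group structure on `AddAut A` (composition), as in the older Mathlib,
where `AddAut A` was a `Group`; it is now an additive group. -/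
instance AddAut.group (A : Type*) [Add A] : Group (AddAut A) where
  mul g h := AddEquiv.trans h g
  one := AddEquiv.refl _
  inv := AddEquiv.symm
  mul_assoc _ _ _ := rfl
  one_mul _ := rfl
  mul_one _ := rfl
  inv_mul_cancel := AddEquiv.self_trans_symm

theorem AddAut.group_mul_apply {A : Type*} [Add A] (e₁ e₂ : AddAut A) (m : A) :
    (e₁ * e₂) m = e₁ (e₂ m) := rfl

theorem AddAut.group_one_apply {A : Type*} [Add A] (m : A) : (1 : AddAut A) m = m := rfl

/-- A 1-cohomology-vanishing ("coflasque") condition for an action `ρ` of `G` on `M`: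
every 1-cocycle of every subgroup is a coboundary. -/
def IsCoflasque {G M : Type*} [Group G] [AddCommGroup M] (ρ : G →* AddAut M) : Prop :=
  ∀ (H : Subgroup G) (c : ↥H → M),
    (∀ g h : ↥H, c (g * h) = c g + ρ ↑g (c h)) → ∃ m : M, ∀ g : ↥H, c g = ρ ↑g m - m

/-- "Flasque" condition (vanishing of `Ĥ⁻¹` for all subgroups): every element killed by
the norm of a subgroup lies in the augmentation submodule. -/
def IsFlasque {G M : Type*} [Group G] [Finite G] [AddCommGroup M] (ρ : G →* AddAut M) : Prop :=
  ∀ (H : Subgroup G) (x : M), (∑ᶠ h : ↥H, ρ ↑h x = 0) →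
    x ∈ AddSubgroup.closure {y | ∃ (h : ↥H) (m : M), y = ρ ↑h m - m}

/-- The permutation action of `G` on `ι → ℤ` induced by an action on `ι`. -/
def permAut {G ι : Type*} [Group G] (act : G →* Equiv.Perm ι) : G →* AddAut (ι → ℤ) where
  toFun g :=
    { toEquiv := Equiv.arrowCongr (act g) (Equiv.refl ℤ)
      map_add' := fun _ _ => rfl }
  map_one' := by ext f i; simp [AddAut.group_one_apply]; rfl
  map_mul' := by
    intro g h; ext f i
    simp [← Equiv.Perm.inv_def, mul_inv_rev, Equiv.Perm.mul_apply, AddAut.group_mul_apply]; rfl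

/-- `ρ` is a permutation representation: `M` is equivariantly isomorphic to a
finitely generated permutation `G`-lattice. -/
def IsPermutationRep {G M : Type*} [Group G] [AddCommGroup M] (ρ : G →* AddAut M) : Prop :=
  ∃ (ι : Type) (_ : Fintype ι) (act : G →* Equiv.Perm ι) (e : M ≃+ (ι → ℤ)),
    ∀ (g : G) (m : M), e (ρ g m) = permAut act g (e m)

/-- `ρ` is invertible (permutation projective): `M` is an equivariant direct summand of a
finitely generated permutation `G`-lattice. -/
def IsInvertibleRep {G M : Type*} [Group G] [AddCommGroup M] (ρ : G →* AddAut M) : Prop :=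
  ∃ (ι : Type) (_ : Fintype ι) (act : G →* Equiv.Perm ι)
    (f : M →+ (ι → ℤ)) (g : (ι → ℤ) →+ M),
      (∀ (γ : G) (m : M), f (ρ γ m) = permAut act γ (f m)) ∧
      (∀ (γ : G) (x : ι → ℤ), g (permAut act γ x) = ρ γ (g x)) ∧
      (∀ m : M, g (f m) = m)

/-- The diagonal action on a product. -/
def prodAut {G M N : Type*} [Group G] [AddCommGroup M] [AddCommGroup N]
    (ρ : G →* AddAut M) (σ : G →* AddAut N) : G →* AddAut (M × N) where
  toFun g := AddEquiv.prodCongr (ρ g) (σ g)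
  map_one' := by
    ext x <;> simp [AddEquiv.prodCongr, AddAut.group_one_apply]
  map_mul' := by
    intro g h
    ext x <;> simp [AddEquiv.prodCongr, AddAut.group_mul_apply]

/-!
If `M|_H` is a retract of a permutation `H`-lattice `ℤ^ι`, inducing up gives equivariant maps
`M → ℤ^{G ×_H ι} → M` whose composite is multiplication by `[G : H]`: the first is
`m ↦ (g, i) ↦ f (g⁻¹ m) i`, the second sums the translates of the given retraction over `G/H`.
The integers `n` for which `M` is a retract of a permutation lattice up to the factor `n` form
an ideal of `ℤ` (take direct sums of the permutation lattices, and rescale the retraction), so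
this ideal contains `gcd [G : Hᵢ] = 1`.
-/

theorem Ideal.natCast_finset_gcd_mem {ι : Type*} {I : Ideal ℤ} (s : Finset ι) {f : ι → ℕ}
    (hf : ∀ i ∈ s, (f i : ℤ) ∈ I) : ((s.gcd f : ℕ) : ℤ) ∈ I := by
  rw [← Submodule.IsPrincipal.span_singleton_generator I] at hf ⊢
  simp only [Ideal.submodule_span_eq, Ideal.mem_span_singleton, ← Int.natAbs_dvd_natAbs,
    Int.natAbs_natCast] at hf ⊢
  exact Finset.dvd_gcd hf

section PermutationLattice

variable {G : Type*} [Group G]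

theorem permAut_apply {ι : Type*} (act : G →* Equiv.Perm ι) (γ : G) (x : ι → ℤ) (i : ι) :
    permAut act γ x i = x ((act γ)⁻¹ i) := rfl

theorem funCongrLeft_permAut {ι κ : Type*} (e : ι ≃ κ) (act : G →* Equiv.Perm ι) (γ : G)
    (x : ι → ℤ) :
    (LinearEquiv.funCongrLeft ℤ ℤ e.symm).toAddEquiv (permAut act γ x) =
      permAut ((e.permCongrHom : Equiv.Perm ι →* Equiv.Perm κ).comp act) γ
        ((LinearEquiv.funCongrLeft ℤ ℤ e.symm).toAddEquiv x) := by
  funext k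
  simp [permAut_apply, Equiv.permCongrHom, Equiv.permCongr, Equiv.equivCongr]

def sumPerm {ι κ : Type*} (act₁ : G →* Equiv.Perm ι) (act₂ : G →* Equiv.Perm κ) :
    G →* Equiv.Perm (ι ⊕ κ) :=
  (Equiv.Perm.sumCongrHom ι κ).comp (act₁.prod act₂)

theorem sumArrowLequivProdArrow_permAut {ι κ : Type*} (act₁ : G →* Equiv.Perm ι)
    (act₂ : G →* Equiv.Perm κ) (γ : G) (x : ι ⊕ κ → ℤ) :
    (LinearEquiv.sumArrowLequivProdArrow ι κ ℤ ℤ).toAddEquiv (permAut (sumPerm act₁ act₂) γ x) =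
      Prod.map (permAut act₁ γ) (permAut act₂ γ)
        ((LinearEquiv.sumArrowLequivProdArrow ι κ ℤ ℤ).toAddEquiv x) :=
  rfl

variable (H : Subgroup G)

noncomputable def outCocycle (γ : G) (q : G ⧸ H) : H :=
  ⟨(γ • q).out⁻¹ * (γ * q.out), by
    rw [← QuotientGroup.eq, QuotientGroup.out_eq']
    exact (MulAction.Quotient.coe_smul_out H γ q).symm⟩

theorem out_mul_outCocycle (γ : G) (q : G ⧸ H) : (γ • q).out * outCocycle H γ q = γ * q.out :=
  mul_inv_cancel_left _ _

theorem outCocycle_one (q : G ⧸ H) : outCocycle H 1 q = 1 :=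
  Subtype.ext (by simp [outCocycle])

theorem outCocycle_mul (γ₁ γ₂ : G) (q : G ⧸ H) :
    outCocycle H (γ₁ * γ₂) q = outCocycle H γ₁ (γ₂ • q) * outCocycle H γ₂ q :=
  Subtype.ext (by simp only [outCocycle, Subgroup.coe_mul, mul_smul]; group)

variable {ι : Type*} (act : H →* Equiv.Perm ι)

/-- The induced `G`-set `G ×_H ι`, identified with `(G ⧸ H) × ι` through the representatives
`Quotient.out`. -/
noncomputable def inducedPerm : G →* Equiv.Perm ((G ⧸ H) × ι) :=
  letI : MulAction G ((G ⧸ H) × ι) :=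
    { smul := fun γ p => (γ • p.1, act (outCocycle H γ p.1) p.2)
      one_smul := fun p => Prod.ext (one_smul G p.1) (by
        change act (outCocycle H 1 p.1) p.2 = p.2
        simp [outCocycle_one])
      mul_smul := fun γ₁ γ₂ p => Prod.ext (mul_smul γ₁ γ₂ p.1) (by
        change act (outCocycle H (γ₁ * γ₂) p.1) p.2 =
          act (outCocycle H γ₁ (γ₂ • p.1)) (act (outCocycle H γ₂ p.1) p.2)
        simp [outCocycle_mul, Equiv.Perm.mul_apply]) }
  MulAction.toPermHom G _

theorem permAut_inducedPerm_apply (γ : G) (x : (G ⧸ H) × ι → ℤ) (q : G ⧸ H) (i : ι) :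
    permAut (inducedPerm H act) γ x (q, i) = x (γ⁻¹ • q, act (outCocycle H γ⁻¹ q) i) := by
  rw [permAut_apply, ← map_inv]
  rfl

theorem funLeft_permAut_inducedPerm (γ : G) (x : (G ⧸ H) × ι → ℤ) (q : G ⧸ H) :
    LinearMap.funLeft ℤ ℤ (Prod.mk q) (permAut (inducedPerm H act) γ x) =
      permAut act (outCocycle H γ⁻¹ q)⁻¹ (LinearMap.funLeft ℤ ℤ (Prod.mk (γ⁻¹ • q)) x) := by
  funext i
  rw [LinearMap.funLeft_apply, permAut_inducedPerm_apply, permAut_apply, map_inv act, inv_inv]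
  rfl

end PermutationLattice

section Induction

variable {G M ι : Type*} [Group G] [AddCommGroup M] (ρ : G →* AddAut M) (H : Subgroup G)

theorem map_mul_addAut_apply (a b : G) (m : M) : ρ (a * b) m = ρ a (ρ b m) := by
  rw [map_mul, AddAut.group_mul_apply]

noncomputable def inducedLift (f : M →+ (ι → ℤ)) : M →+ ((G ⧸ H) × ι → ℤ) :=
  AddMonoidHom.mk' (fun m p => f (ρ p.1.out⁻¹ m) p.2) fun _ _ => by funext; simp

noncomputable def inducedSum [Fintype (G ⧸ H)] (g : (ι → ℤ) →+ M) : ((G ⧸ H) × ι → ℤ) →+ M :=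
  ∑ q : G ⧸ H,
    (ρ q.out).toAddMonoidHom.comp (g.comp (LinearMap.funLeft ℤ ℤ (Prod.mk q)).toAddMonoidHom)

theorem inducedSum_apply [Fintype (G ⧸ H)] (g : (ι → ℤ) →+ M) (x : (G ⧸ H) × ι → ℤ) :
    inducedSum ρ H g x = ∑ q : G ⧸ H, ρ q.out (g (LinearMap.funLeft ℤ ℤ (Prod.mk q) x)) := by
  simp [inducedSum]

variable {ρ H} (act : H →* Equiv.Perm ι)

theorem inducedLift_equivariant {f : M →+ (ι → ℤ)}
    (hf : ∀ (h : H) (m : M), f (ρ h m) = permAut act h (f m)) (γ : G) (m : M) :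
    inducedLift ρ H f (ρ γ m) = permAut (inducedPerm H act) γ (inducedLift ρ H f m) := by
  funext ⟨q, i⟩
  have key := out_mul_outCocycle H γ⁻¹ q
  set c := outCocycle H γ⁻¹ q
  have hf' : f (ρ (γ⁻¹ • q).out⁻¹ m) (act c i) = f (ρ ↑c⁻¹ (ρ (γ⁻¹ • q).out⁻¹ m)) i := by
    rw [hf, permAut_apply, map_inv act, inv_inv]
  rw [permAut_inducedPerm_apply]
  simp only [inducedLift, AddMonoidHom.mk'_apply]
  rw [hf', ← map_mul_addAut_apply, ← map_mul_addAut_apply, Subgroup.coe_inv, ← mul_inv_rev, key,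
    mul_inv_rev, inv_inv]

theorem inducedSum_equivariant [Fintype (G ⧸ H)] {g : (ι → ℤ) →+ M}
    (hg : ∀ (h : H) (x : ι → ℤ), g (permAut act h x) = ρ h (g x)) (γ : G)
    (x : (G ⧸ H) × ι → ℤ) :
    inducedSum ρ H g (permAut (inducedPerm H act) γ x) = ρ γ (inducedSum ρ H g x) := by
  have hterm (q : G ⧸ H) :
      ρ q.out (g (LinearMap.funLeft ℤ ℤ (Prod.mk q) (permAut (inducedPerm H act) γ x))) =
        ρ γ (ρ (γ⁻¹ • q).out (g (LinearMap.funLeft ℤ ℤ (Prod.mk (γ⁻¹ • q)) x))) := by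
    have key := out_mul_outCocycle H γ⁻¹ q
    rw [funLeft_permAut_inducedPerm, hg, ← map_mul_addAut_apply, ← map_mul_addAut_apply,
      Subgroup.coe_inv, mul_inv_eq_iff_eq_mul.mpr (by rw [mul_assoc, key, mul_inv_cancel_left])]
  rw [inducedSum_apply, inducedSum_apply, map_sum]
  simp only [hterm]
  exact Fintype.sum_equiv (MulAction.toPerm γ⁻¹) _ _ fun _ => rfl

theorem inducedSum_inducedLift [Fintype (G ⧸ H)] {f : M →+ (ι → ℤ)} {g : (ι → ℤ) →+ M}
    {n : ℤ} (hgf : ∀ m : M, g (f m) = n • m) (m : M) :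
    inducedSum ρ H g (inducedLift ρ H f m) = (H.index * n) • m := by
  have hterm (q : G ⧸ H) :
      ρ q.out (g (LinearMap.funLeft ℤ ℤ (Prod.mk q) (inducedLift ρ H f m))) = n • m := by
    rw [show LinearMap.funLeft ℤ ℤ (Prod.mk q) (inducedLift ρ H f m) = f (ρ q.out⁻¹ m) from rfl,
      hgf, map_zsmul, ← map_mul_addAut_apply, mul_inv_cancel, map_one, AddAut.group_one_apply]
  rw [inducedSum_apply]
  simp only [hterm, Finset.sum_const, Finset.card_univ, ← Nat.card_eq_fintype_card,
    ← Subgroup.index_eq_card, mul_smul, natCast_zsmul]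

end Induction

section PermRetract

variable {G M : Type*} [Group G] [AddCommGroup M]

def IsPermRetractUpTo (ρ : G →* AddAut M) (n : ℤ) : Prop :=
  ∃ (ι : Type) (_ : Fintype ι) (act : G →* Equiv.Perm ι)
    (f : M →+ (ι → ℤ)) (g : (ι → ℤ) →+ M),
      (∀ (γ : G) (m : M), f (ρ γ m) = permAut act γ (f m)) ∧
      (∀ (γ : G) (x : ι → ℤ), g (permAut act γ x) = ρ γ (g x)) ∧
      (∀ m : M, g (f m) = n • m)

theorem isInvertibleRep_iff_isPermRetractUpTo_one (ρ : G →* AddAut M) :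
    IsInvertibleRep ρ ↔ IsPermRetractUpTo ρ 1 := by
  simp only [IsInvertibleRep, IsPermRetractUpTo, one_smul]

variable {ρ : G →* AddAut M}

theorem IsPermRetractUpTo.of_finite {n : ℤ} {κ : Type*} [Finite κ] (act : G →* Equiv.Perm κ)
    (f : M →+ (κ → ℤ)) (g : (κ → ℤ) →+ M)
    (hf : ∀ (γ : G) (m : M), f (ρ γ m) = permAut act γ (f m))
    (hg : ∀ (γ : G) (x : κ → ℤ), g (permAut act γ x) = ρ γ (g x))
    (hgf : ∀ m : M, g (f m) = n • m) :
    IsPermRetractUpTo ρ n := by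
  let e := Finite.equivFin κ
  let E := (LinearEquiv.funCongrLeft ℤ ℤ e.symm).toAddEquiv
  refine ⟨_, inferInstance, (e.permCongrHom : Equiv.Perm κ →* _).comp act,
    E.toAddMonoidHom.comp f, g.comp E.symm.toAddMonoidHom, fun γ m => ?_, fun γ x => ?_,
    fun m => ?_⟩
  · simp only [AddMonoidHom.coe_comp, Function.comp_apply, hf]
    exact funCongrLeft_permAut e act γ (f m)
  · obtain ⟨y, rfl⟩ := E.surjective x
    simp only [AddMonoidHom.coe_comp, Function.comp_apply, AddEquiv.coe_toAddMonoidHom, E,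
      ← funCongrLeft_permAut, E.symm_apply_apply, hg]
  · simp only [AddMonoidHom.coe_comp, Function.comp_apply, AddEquiv.coe_toAddMonoidHom,
      E.symm_apply_apply, hgf]

theorem IsPermRetractUpTo.zero (ρ : G →* AddAut M) : IsPermRetractUpTo ρ 0 :=
  ⟨Empty, inferInstance, 1, 0, 0, fun _ _ => (map_zero _).symm, fun _ _ => (map_zero _).symm,
    fun _ => (zero_smul ℤ _).symm⟩

theorem IsPermRetractUpTo.add {n₁ n₂ : ℤ} (h₁ : IsPermRetractUpTo ρ n₁)
    (h₂ : IsPermRetractUpTo ρ n₂) : IsPermRetractUpTo ρ (n₁ + n₂) := by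
  obtain ⟨ι₁, _, act₁, f₁, g₁, hf₁, hg₁, hgf₁⟩ := h₁
  obtain ⟨ι₂, _, act₂, f₂, g₂, hf₂, hg₂, hgf₂⟩ := h₂
  let E := (LinearEquiv.sumArrowLequivProdArrow ι₁ ι₂ ℤ ℤ).toAddEquiv
  refine ⟨ι₁ ⊕ ι₂, inferInstance, sumPerm act₁ act₂,
    E.symm.toAddMonoidHom.comp (f₁.prod f₂), (g₁.coprod g₂).comp E.toAddMonoidHom,
    fun γ m => E.injective ?_, fun γ x => ?_, fun m => ?_⟩
  · simp only [AddMonoidHom.coe_comp, Function.comp_apply, AddEquiv.coe_toAddMonoidHom, E,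
      sumArrowLequivProdArrow_permAut, AddEquiv.apply_symm_apply, AddMonoidHom.prod_apply,
      hf₁, hf₂, Prod.map]
  · obtain ⟨y, rfl⟩ := E.symm.surjective x
    simp only [AddMonoidHom.coe_comp, Function.comp_apply, AddEquiv.coe_toAddMonoidHom, E,
      sumArrowLequivProdArrow_permAut, AddEquiv.apply_symm_apply, AddMonoidHom.coprod_apply,
      hg₁, hg₂, Prod.map, map_add]
  · simp [hgf₁, hgf₂, add_smul]

theorem IsPermRetractUpTo.mul_left {n : ℤ} (a : ℤ) (h : IsPermRetractUpTo ρ n) :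
    IsPermRetractUpTo ρ (a * n) := by
  obtain ⟨ι, _, act, f, g, hf, hg, hgf⟩ := h
  refine ⟨ι, inferInstance, act, f, a • g, hf, fun γ x => ?_, fun m => ?_⟩
  · simp [hg]
  · simp [hgf, mul_smul]

theorem IsPermRetractUpTo.induce {H : Subgroup G} [H.FiniteIndex] {n : ℤ}
    (h : IsPermRetractUpTo (ρ.comp H.subtype) n) : IsPermRetractUpTo ρ (H.index * n) := by
  obtain ⟨ι, _, act, f, g, hf, hg, hgf⟩ := h
  have := Fintype.ofFinite (G ⧸ H)
  exact .of_finite (inducedPerm H act) (inducedLift ρ H f) (inducedSum ρ H g)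
    (inducedLift_equivariant act hf) (inducedSum_equivariant act hg) (inducedSum_inducedLift hgf)

variable (ρ) in
def permRetractIdeal : Ideal ℤ where
  carrier := {n | IsPermRetractUpTo ρ n}
  zero_mem' := IsPermRetractUpTo.zero ρ
  add_mem' := IsPermRetractUpTo.add
  smul_mem' a _ := IsPermRetractUpTo.mul_left a

@[simp]
theorem mem_permRetractIdeal {n : ℤ} : n ∈ permRetractIdeal ρ ↔ IsPermRetractUpTo ρ n :=
  Iff.rfl

end PermRetract

theorem invertible_of_coprime_restrictions_general {G M : Type*} [Group G] [Fintype G]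
    [AddCommGroup M]
    (ρ : G →* AddAut M) {k : ℕ} (Hs : Fin k → Subgroup G)
    (hgcd : (Finset.univ : Finset (Fin k)).gcd (fun i => (Hs i).index) = 1)
    (hinv : ∀ i, IsInvertibleRep (ρ.comp (Hs i).subtype)) :
    IsInvertibleRep ρ := by
  have hindex (i : Fin k) : ((Hs i).index : ℤ) ∈ permRetractIdeal ρ := by
    simpa using ((isInvertibleRep_iff_isPermRetractUpTo_one _).mp (hinv i)).induce
  rw [isInvertibleRep_iff_isPermRetractUpTo_one, ← Nat.cast_one, ← hgcd]
  exact Ideal.natCast_finset_gcd_mem _ fun i _ => hindex i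

/-- If the restrictions of a `G`-lattice `M` to subgroups `H₁, …, H_k` of coprime indices
are all invertible (direct summands of permutation lattices), then `M` is an invertible
`G`-lattice. -/
theorem invertible_of_coprime_restrictions {G M : Type*} [Group G] [Fintype G]
    [AddCommGroup M] [Module.Free ℤ M] [Module.Finite ℤ M]
    (ρ : G →* AddAut M) {k : ℕ} (Hs : Fin k → Subgroup G)
    (hgcd : (Finset.univ : Finset (Fin k)).gcd (fun i => (Hs i).index) = 1)
    (hinv : ∀ i, IsInvertibleRep (ρ.comp (Hs i).subtype)) :
    IsInvertibleRep ρ :=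
  invertible_of_coprime_restrictions_general ρ Hs hgcd hinv
end

section
/- Let G = ⟨σ, τ | σⁿ = τ^m = e, τ⁻¹στ = σ^r⟩ with gcd(n, m) = 1 and r^m ≡ 1 (mod n). In the free ℤG-module ℤ(G/⟨σ⟩) ⊕ ℤ(G/⟨τ⟩) ⊕ ℤG with generators Ŝ = e⟨σ⟩, T̂ = e⟨τ⟩, Â = e, and with π mapping Ŝ, T̂, Â to the flows S, T, A on the Cayley graph Cay(G, {σ, τ}) (S the σ-cycle at e, T the τ-cycle at e, A = (e→σ→στ) - (e→τ→τσ→⋯→τσ^r)), the element U_e := N_σ·Â - Ŝ + r·τŜ lies in ker(π), where N_σ = ∑_{i=0}^{n-1} σ^i. -/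
/-!
On the τ-edges the σ-translates of `A` telescope along the σ-cycle, and `σⁿ = e` makes the
sum vanish. On the σ-edges, pushing `σⁱ` past `τ` turns the `τσ`-path of `σⁱ·A` into the
edges `τσ^(ri+j)`, `j < r`. Since `σ^r = τ⁻¹στ` is conjugate to `σ`, it has the same order `n`,
so `r` is a unit mod `n` and `i ↦ ri + j` permutes `ℤ/n`: each of the `r` inner sums is `τ(S)`.
-/

/-- The circular flow `S : e → σ → σ² → ⋯ → σ^{n-1} → e` on the Cayley graph of `G`
with respect to `{σ, τ}`, whose edges are indexed by `G × Bool` (`(g, false)` is the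
edge `g → gσ`, `(g, true)` is the edge `g → gτ`). -/
def flowS {G : Type*} [Group G] [DecidableEq G] (σ : G) (n : ℕ) : G × Bool → ℤ :=
  fun p => if p.2 then 0 else ∑ i ∈ Finset.range n, (if p.1 = σ ^ i then 1 else 0)

/-- The circular flow `T : e → τ → τ² → ⋯ → τ^{m-1} → e`. -/
def flowT {G : Type*} [Group G] [DecidableEq G] (τ : G) (m : ℕ) : G × Bool → ℤ :=
  fun p => if p.2 then ∑ j ∈ Finset.range m, (if p.1 = τ ^ j then 1 else 0) else 0

/-- The flow `A = (e → σ → στ) - (e → τ → τσ → ⋯ → τσ^r)`. -/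
def flowA {G : Type*} [Group G] [DecidableEq G] (σ τ : G) (r : ℕ) : G × Bool → ℤ :=
  fun p =>
    if p.2 then (if p.1 = σ then 1 else 0) - (if p.1 = 1 then 1 else 0)
    else (if p.1 = 1 then 1 else 0)
      - ∑ i ∈ Finset.range r, (if p.1 = τ * σ ^ i then 1 else 0)

open Finset

section OrderOf

variable {G : Type*} [Group G]

theorem IsOfFinOrder.coprime_of_orderOf_pow_eq {x : G} (hx : IsOfFinOrder x) {c : ℕ}
    (h : orderOf (x ^ c) = orderOf x) : (orderOf x).Coprime c := by
  rw [hx.orderOf_pow, Nat.div_eq_self] at h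
  exact h.resolve_left hx.orderOf_pos.ne'

theorem sum_range_orderOf_pow_mul_add {M : Type*} [AddCommMonoid M] {x : G} {c : ℕ}
    (hc : orderOf (x ^ c) = orderOf x) (j : ℕ) (f : G → M) :
    ∑ i ∈ range (orderOf x), f (x ^ (c * i + j)) = ∑ i ∈ range (orderOf x), f (x ^ i) := by
  set n := orderOf x
  obtain hn0 | hpos := n.eq_zero_or_pos
  · simp [hn0]
  have hcop : n.Coprime c := (orderOf_pos_iff.mp hpos).coprime_of_orderOf_pow_eq hc
  set e : ℕ → ℕ := fun i => (c * i + j) % n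
  have he_maps : Set.MapsTo e (range n) (range n) := fun i _ => by
    simpa [e] using Nat.mod_lt _ hpos
  have he_inj : Set.InjOn e (range n) := fun a ha b hb hab => by
    simp only [coe_range, Set.mem_Iio] at ha hb
    exact ((Nat.ModEq.add_right_cancel' j hab).cancel_left_of_coprime hcop).eq_of_lt_of_lt ha hb
  exact sum_nbij e he_maps he_inj
    (((range n).finite_toSet.injOn_iff_bijOn_of_mapsTo he_maps).mp he_inj).surjOn
    fun i _ => congrArg f (pow_mod_orderOf x _).symm

end OrderOf

section Flows

variable {G : Type*} [Group G] [DecidableEq G]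

theorem sum_flowA_translate_tau_edge {σ : G} {n : ℕ} (hσ : σ ^ n = 1) (τ : G) (r : ℕ) (x : G) :
    ∑ i ∈ range n, flowA σ τ r ((σ ^ i)⁻¹ * x, true) = 0 := by
  have hterm : ∀ i, flowA σ τ r ((σ ^ i)⁻¹ * x, true)
      = (if x = σ ^ (i + 1) then 1 else 0) - (if x = σ ^ i then 1 else 0) := by
    intro i
    simp only [flowA, if_true, inv_mul_eq_iff_eq_mul, mul_one, pow_succ]
  rw [sum_congr rfl fun i _ => hterm i, sum_range_sub fun i => if x = σ ^ i then 1 else 0, hσ,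
    pow_zero, sub_self]

theorem sum_flowA_translate_sigma_edge {σ τ : G} {r : ℕ} (hrel : τ⁻¹ * σ * τ = σ ^ r) (x : G) :
    ∑ i ∈ range (orderOf σ), flowA σ τ r ((σ ^ i)⁻¹ * x, false)
      = flowS σ (orderOf σ) (x, false) - r * flowS σ (orderOf σ) (τ⁻¹ * x, false) := by
  have hsemi : SemiconjBy τ (σ ^ r) σ := by
    rw [← hrel]
    show τ * (τ⁻¹ * σ * τ) = σ * τ
    group
  have hcomm : ∀ i j : ℕ, σ ^ i * (τ * σ ^ j) = τ * σ ^ (r * i + j) := fun i j => by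
    rw [pow_add, pow_mul, ← mul_assoc, ← mul_assoc, (hsemi.pow_right i).eq]
  have hterm : ∀ i, flowA σ τ r ((σ ^ i)⁻¹ * x, false) = (if x = σ ^ i then 1 else 0)
      - ∑ j ∈ range r, if x = τ * σ ^ (r * i + j) then 1 else 0 := fun i => by
    simp only [flowA, Bool.false_eq_true, if_false, inv_mul_eq_iff_eq_mul, mul_one, hcomm]
  have hreindex : ∀ j, ∑ i ∈ range (orderOf σ), (if x = τ * σ ^ (r * i + j) then 1 else 0)
      = flowS σ (orderOf σ) (τ⁻¹ * x, false) := fun j => by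
    simp only [flowS, Bool.false_eq_true, if_false, inv_mul_eq_iff_eq_mul]
    exact sum_range_orderOf_pow_mul_add (hsemi.orderOf_eq _) j fun g => if x = τ * g then 1 else 0
  calc ∑ i ∈ range (orderOf σ), flowA σ τ r ((σ ^ i)⁻¹ * x, false)
      = flowS σ (orderOf σ) (x, false) - ∑ j ∈ range r, ∑ i ∈ range (orderOf σ),
          (if x = τ * σ ^ (r * i + j) then 1 else 0) := by
        rw [sum_congr rfl fun i _ => hterm i, sum_sub_distrib, sum_comm]
        rfl
    _ = flowS σ (orderOf σ) (x, false) - r * flowS σ (orderOf σ) (τ⁻¹ * x, false) := by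
        simp only [hreindex, sum_const, card_range, nsmul_eq_mul]

end Flows

theorem norm_of_A_eq_S_sub_r_tau_S_general {G : Type*} [Group G] [DecidableEq G]
    (σ τ : G) (n r : ℕ)
    (hn : orderOf σ = n)
    (hrel : τ⁻¹ * σ * τ = σ ^ r) :
    ∀ p : G × Bool,
      (∑ i ∈ Finset.range n, flowA σ τ r ((σ ^ i)⁻¹ * p.1, p.2))
        = flowS σ n p - r * flowS σ n (τ⁻¹ * p.1, p.2) := by
  subst hn
  rintro ⟨x, _ | _⟩
  · exact sum_flowA_translate_sigma_edge hrel x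
  · simp [flowS, sum_flowA_translate_tau_edge (pow_orderOf_eq_one σ)]

/-- In the group `G = ⟨σ, τ | σⁿ = τ^m = e, τ⁻¹στ = σ^r⟩` with `gcd(n,m) = 1` and
`r^m ≡ 1 (mod n)`, the element `U_e = N_σ·Â - Ŝ + r·τŜ` lies in the kernel of the map
`π` sending `Ŝ, T̂, Â` to the flows `S, T, A` on `Cay(G, {σ, τ})`; equivalently, the
flow identity `N_σ(A) = S - r·τ(S)` holds, where `N_σ(A) = ∑_{i<n} σⁱ(A)` and a group
element `g` acts on flows by `(g·f)(e) = f(g⁻¹·e)` (left translation of edges). -/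
theorem norm_of_A_eq_S_sub_r_tau_S {G : Type*} [Group G] [DecidableEq G]
    (σ τ : G) (n m r : ℕ)
    (hn : orderOf σ = n) (hm : orderOf τ = m)
    (hcop : Nat.Coprime n m)
    (hrel : τ⁻¹ * σ * τ = σ ^ r)
    (hr : r ^ m ≡ 1 [MOD n]) :
    ∀ p : G × Bool,
      (∑ i ∈ Finset.range n, flowA σ τ r ((σ ^ i)⁻¹ * p.1, p.2))
        = flowS σ n p - r * flowS σ n (τ⁻¹ * p.1, p.2) :=
  norm_of_A_eq_S_sub_r_tau_S_general σ τ n r hn hrel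
end

section
/- Let H be a finite abelian group of exponent dividing m acting on a field K, with kernel H₀ = ker(H → Aut(K)), and suppose the fixed field K^H contains a primitive m-th root of unity. Let H act on K(x_h : h ∈ H) by permuting the variables via left translation and acting on K. For each character φ ∈ Hom(H, (K^H)^×) set x_φ = ∑_{h∈H} φ(h⁻¹) x_h. Then K(x_h : h ∈ H) = K(x_φ : φ ∈ H*) and g(x_φ) = φ(g)·x_φ for all g ∈ H. -/
/-- The rational function field `K(x_h : h ∈ H)`. -/
abbrev VarField (K H : Type*) [Field K] : Type _ :=
  FractionRing (MvPolynomial H K)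

/-- The embedding of the constants `K` into `K(x_h : h ∈ H)`. -/
noncomputable def constEmb (K H : Type*) [Field K] : K →+* VarField K H :=
  (algebraMap (MvPolynomial H K) (VarField K H)).comp
    (MvPolynomial.C : K →+* MvPolynomial H K)

/-- The indeterminate `x_h`. -/
noncomputable def Xvar (K : Type*) {H : Type*} [Field K] (h : H) : VarField K H :=
  algebraMap (MvPolynomial H K) (VarField K H) (MvPolynomial.X h)

/-- The discrete Fourier transform `x_φ = ∑_{h ∈ H} φ(h⁻¹) x_h` of the variables with
respect to a character `φ`. -/
noncomputable def Xchar {K H : Type*} [Field K] [Group H] [Fintype H]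
    (φ : H →* Kˣ) : VarField K H :=
  ∑ h : H, constEmb K H ↑(φ h⁻¹) * Xvar K h

/-!
Every character `φ : H →* Kˣ` takes values among the `m`-th roots of unity, that is, among the
powers of the `H`-fixed `ζ`, so its values are fixed by `H`. Substituting `h ↦ g⁻¹ h` in `x_φ` gives
`g(x_φ) = φ(g) x_φ`. Orthogonality of characters, `∑_φ φ(a) = |H|·[a = 1]`, inverts the
Fourier transform: `∑_φ φ(h) x_φ = |H| x_h`, and `|H|` is invertible in `K` because it divides
a power of `m`. Hence every `x_h` lies in `K(x_φ : φ ∈ H*)`.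
-/

theorem smul_eq_self_of_pow_eq_one {M K : Type*} [Monoid M] [CommRing K] [IsDomain K]
    [MulSemiringAction M K] {m : ℕ} [NeZero m] {ζ x : K} (hζ : IsPrimitiveRoot ζ m)
    {g : M} (hgζ : g • ζ = ζ) (hx : x ^ m = 1) : g • x = x := by
  obtain ⟨i, -, rfl⟩ := hζ.eq_pow_of_pow_eq_one hx
  rw [smul_pow', hgζ]

theorem MonoidHom.smul_units_apply_eq_self {G M K : Type*} [Monoid G] [Monoid M] [CommRing K]
    [IsDomain K] [MulSemiringAction M K] {m : ℕ} [NeZero m] (hexp : Monoid.exponent G ∣ m)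
    {ζ : K} (hζ : IsPrimitiveRoot ζ m) {g : M} (hgζ : g • ζ = ζ) (φ : G →* Kˣ) (h : G) :
    g • (φ h : K) = φ h := by
  refine smul_eq_self_of_pow_eq_one hζ hgζ ?_
  rw [← Units.val_pow_eq_pow_val, ← map_pow,
    Monoid.exponent_dvd_iff_forall_pow_eq_one.mp hexp h, map_one, Units.val_one]

theorem Monoid.natCast_card_ne_zero_of_exponent_dvd {G K : Type*} [CommGroup G] [Finite G]
    [CommRing K] [IsReduced K] {m : ℕ} (hexp : Monoid.exponent G ∣ m) (hm : (m : K) ≠ 0) :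
    (Nat.card G : K) ≠ 0 := by
  obtain ⟨k, hk⟩ := (card_dvd_exponent_pow_rank G).trans
    (pow_dvd_pow_of_dvd hexp (Group.rank G))
  intro hcard
  apply hm
  apply IsReduced.eq_zero _ ⟨Group.rank G, _⟩
  rw [← Nat.cast_pow, hk, Nat.cast_mul, hcard, zero_mul]

section Characters

variable {G K : Type*} [CommGroup G] [Fintype G] [CommRing K]
  [HasEnoughRootsOfUnity K (Monoid.exponent G)] [Fintype (G →* Kˣ)]

theorem MonoidHom.sum_units_apply_eq_zero [IsDomain K] {a : G} (ha : a ≠ 1) :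
    ∑ φ : G →* Kˣ, (φ a : K) = 0 := by
  obtain ⟨ψ, hψ⟩ := CommGroup.exists_apply_ne_one_of_hasEnoughRootsOfUnity G K ha
  refine eq_zero_of_mul_eq_self_left (b := (ψ a : K)) (by simpa using hψ) ?_
  simp only [Finset.mul_sum, ← Units.val_mul, ← MonoidHom.mul_apply]
  exact Fintype.sum_bijective _ (Group.mulLeft_bijective ψ) _ _ fun _ ↦ rfl

theorem MonoidHom.sum_units_apply_one :
    ∑ φ : G →* Kˣ, (φ 1 : K) = Fintype.card G := by
  simp only [map_one, Units.val_one, Finset.sum_const, Finset.card_univ, nsmul_eq_mul, mul_one,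
    Fintype.card_eq_nat_card, CommGroup.card_monoidHom_of_hasEnoughRootsOfUnity]

theorem MonoidHom.sum_units_apply_eq_ite [IsDomain K] [DecidableEq G] (a : G) :
    ∑ φ : G →* Kˣ, (φ a : K) = if a = 1 then (Fintype.card G : K) else 0 := by
  split_ifs with ha
  · rw [ha, sum_units_apply_one]
  · exact sum_units_apply_eq_zero ha

end Characters

section CharTransform

variable {G K A : Type*} [Group G] [Fintype G] [CommRing K] [CommRing A]

def charTransform (ι : K →+* A) (x : G → A) (φ : G →* Kˣ) : A :=
  ∑ h, ι (φ h⁻¹) * x h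

theorem map_charTransform (ι : K →+* A) (x : G → A) (φ : G →* Kˣ) (σ : A →+* A) (g : G)
    (hσι : ∀ h, σ (ι (φ h)) = ι (φ h)) (hσx : ∀ h, σ (x h) = x (g * h)) :
    σ (charTransform ι x φ) = ι (φ g) * charTransform ι x φ := by
  calc σ (charTransform ι x φ) = ∑ h, ι (φ h⁻¹) * x (g * h) := by
        simp only [charTransform, map_sum, map_mul, hσι, hσx]
    _ = ∑ h, ι (φ g) * (ι (φ h⁻¹) * x h) := by
        refine Fintype.sum_equiv (Equiv.mulLeft g) _ _ fun h ↦ ?_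
        have hφ : φ g * φ (g * h)⁻¹ = φ h⁻¹ := by simp [mul_inv_rev]
        rw [Equiv.coe_mulLeft, ← mul_assoc, ← map_mul, ← Units.val_mul, hφ]
    _ = ι (φ g) * charTransform ι x φ := by rw [charTransform, Finset.mul_sum]

end CharTransform

theorem sum_mul_charTransform {G K A : Type*} [CommGroup G] [Fintype G] [CommRing K]
    [IsDomain K] [CommRing A] [HasEnoughRootsOfUnity K (Monoid.exponent G)]
    [Fintype (G →* Kˣ)] (ι : K →+* A) (x : G → A) (g : G) :
    ∑ φ : G →* Kˣ, ι (φ g) * charTransform ι x φ = ι (Fintype.card G) * x g := by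
  classical
  simp only [charTransform, Finset.mul_sum, ← mul_assoc, ← map_mul, ← Units.val_mul]
  rw [Finset.sum_comm]
  simp only [← Finset.sum_mul, ← map_sum, MonoidHom.sum_units_apply_eq_ite, mul_inv_eq_one]
  simp [apply_ite ι, ite_mul]

theorem Xchar_eq_charTransform {K H : Type*} [Field K] [Group H] [Fintype H] (φ : H →* Kˣ) :
    Xchar φ = charTransform (constEmb K H) (Xvar K) φ :=
  rfl

theorem Subfield.eq_top_of_constEmb_mem_of_Xvar_mem {K H : Type*} [Field K]
    (F : Subfield (VarField K H)) (hC : ∀ c, constEmb K H c ∈ F) (hX : ∀ h, Xvar K h ∈ F) :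
    F = ⊤ := by
  have hpoly (p : MvPolynomial H K) : algebraMap _ (VarField K H) p ∈ F := by
    induction p using MvPolynomial.induction_on with
    | C c => exact hC c
    | add p q hp hq => rw [map_add]; exact F.add_mem hp hq
    | mul_X p h hp => rw [map_mul]; exact F.mul_mem hp (hX h)
  refine eq_top_iff.mpr fun x _ ↦ ?_
  obtain ⟨p, q, -, rfl⟩ := IsFractionRing.div_surjective (A := MvPolynomial H K) x
  exact F.div_mem (hpoly p) (hpoly q)

theorem Subfield.closure_eq_top_of_Xchar_mem {K H : Type*} [Field K] [CommGroup H]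
    [Fintype H] [HasEnoughRootsOfUnity K (Monoid.exponent H)]
    (hcard : (Fintype.card H : K) ≠ 0) {S : Set (VarField K H)}
    (hC : Set.range (constEmb K H) ⊆ S) (hX : ∀ φ : H →* Kˣ, Xchar φ ∈ S) :
    closure S = ⊤ := by
  have := Fintype.ofFinite (H →* Kˣ)
  have hC' (c : K) : constEmb K H c ∈ closure S := subset_closure (hC ⟨c, rfl⟩)
  refine eq_top_of_constEmb_mem_of_Xvar_mem _ hC' fun h ↦ ?_
  have hinv := sum_mul_charTransform (constEmb K H) (Xvar K) h
  rw [(eq_inv_mul_iff_mul_eq₀ ((map_ne_zero _).mpr hcard)).mpr hinv.symm]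
  exact mul_mem (inv_mem (hC' _))
    (sum_mem fun φ _ ↦ mul_mem (hC' _) (subset_closure (hX φ)))

/-- Fourier analysis of the permutation action on variables: if a finite abelian group
`H` of exponent dividing `m` acts on `K` and on `K(x_h : h ∈ H)` by `g(x_h) = x_{gh}`,
and `K^H` contains a primitive `m`-th root of unity, then
`K(x_h : h ∈ H) = K(x_φ : φ ∈ H^*)` where `H^* = Hom(H, (K^H)^×)`, and
`g(x_φ) = φ(g)·x_φ` for every character `φ` and every `g ∈ H`. -/
theorem fourier_transform_of_variables {H K : Type*} [CommGroup H] [Fintype H]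
    [Field K] [MulSemiringAction H K]
    (m : ℕ) (hm : 0 < m) (hexp : Monoid.exponent H ∣ m)
    (ζ : K) (hζ : IsPrimitiveRoot ζ m) (hζfix : ∀ g : H, g • ζ = ζ)
    (σ : H →* (VarField K H ≃+* VarField K H))
    (hσC : ∀ (g : H) (c : K), σ g (constEmb K H c) = constEmb K H (g • c))
    (hσX : ∀ g h : H, σ g (Xvar K h) = Xvar K (g * h)) :
    (Subfield.closure (Set.range (constEmb K H) ∪
        {x | ∃ φ : H →* Kˣ, (∀ g h : H, g • ((φ h : Kˣ) : K) = ((φ h : Kˣ) : K))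
          ∧ x = Xchar φ}) = ⊤) ∧
    ∀ φ : H →* Kˣ, (∀ g h : H, g • ((φ h : Kˣ) : K) = ((φ h : Kˣ) : K)) →
      ∀ g : H, σ g (Xchar φ) = constEmb K H ↑(φ g) * Xchar φ := by
  have : NeZero m := ⟨hm.ne'⟩
  have : HasEnoughRootsOfUnity K m := ⟨⟨ζ, hζ⟩, inferInstance⟩
  have := HasEnoughRootsOfUnity.of_dvd K hexp
  have hcard : (Fintype.card H : K) ≠ 0 := Fintype.card_eq_nat_card ▸
    Monoid.natCast_card_ne_zero_of_exponent_dvd hexp hζ.neZero'.out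
  refine ⟨Subfield.closure_eq_top_of_Xchar_mem hcard Set.subset_union_left fun φ ↦
    .inr ⟨φ, fun g ↦ φ.smul_units_apply_eq_self hexp hζ (hζfix g), rfl⟩, fun φ hφ g ↦ ?_⟩
  rw [Xchar_eq_charTransform]
  exact map_charTransform _ _ φ (σ g).toRingHom g
    (fun h ↦ (hσC g _).trans (congrArg _ (hφ g h))) (hσX g)
end
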